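/- Let α > 0, c ∈ ℝⁿ, x ∈ ℝⁿ, and for γ > 0, μ > 0 let φ(x, μ, γ) be the unique minimizer over u ∈ ℝⁿ of (1/2)‖x − u‖² + γμ B(u), where B(u) = −ln(α − ‖u − c‖²) if ‖u − c‖² < α and +∞ otherwise. Define M(x, μ, γ) = Iₙ − 2 (x − φ(x, μ, γ)) (φ(x, μ, γ) − c)ᵀ / (α − 3‖φ(x, μ, γ) − c‖² + 2γμ + 2 (φ(x, μ, γ) − c)ᵀ(x − c)). Then φ(x, ·, ·) is differentiable on (0, +∞)², with ∂φ/∂μ (x, μ, γ) = (−2γ/(α − ‖φ(x, μ, γ) − c‖² + 2γμ)) M(x, μ, γ)(φ(x, μ, γ) − c) and ∂φ/∂γ (x, μ, γ) = (−2μ/(α − ‖φ(x, μ, γ) − c‖² + 2γμ)) M(x, μ, γ)(φ(x, μ, γ) − c). -/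

import Mathlib

/-!
The objective `½‖x - u‖² + γμ B(u)` is convex, so its minimizer `φ(μ, γ)` is its stationary point.
That point lies on the ray `c + t (x - c)`, `0 < t < 1`, and stationarity there is the scalar
equation `γμ = (1 - t)(α - t²r) / (2t)` with `r = ‖x - c‖²`. The right-hand side has nonzero
derivative at every root, so by the inverse function theorem the root `t` is a differentiable
function of the single variable `s = γμ`, with `t'(s) = -2t / (α - 3t²r + 2s + 2tr)`. Hence
`φ(μ, γ) = c + t(γμ) (x - c)` near each point, and the chain rule gives both partial derivatives;
`M(x, μ, γ)(φ - c)` is the multiple `t (α - t²r + 2γμ) / (α - 3t²r + 2γμ + 2tr)` of `x - c`.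
-/

open scoped InnerProductSpace

/-- Logarithmic barrier of the Euclidean ball `{u : ‖u - c‖² ≤ α}`. -/
noncomputable def ballBarrier {n : ℕ} (α : ℝ) (c u : EuclideanSpace ℝ (Fin n)) : EReal :=
  if ‖u - c‖ ^ 2 < α then ((- Real.log (α - ‖u - c‖ ^ 2) : ℝ) : EReal) else ⊤

/-- The objective `u ↦ (1/2)‖x-u‖² + γμ B(u)` defining `prox_{γμB}(x)`. -/
noncomputable def ballProxObj {n : ℕ} (α : ℝ) (c : EuclideanSpace ℝ (Fin n)) (γ μ : ℝ)
    (x u : EuclideanSpace ℝ (Fin n)) : EReal :=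
  ((1 / 2 * ‖x - u‖ ^ 2 : ℝ) : EReal) + ((γ * μ : ℝ) : EReal) * ballBarrier α c u

/-- `M(x,μ,γ)` applied to the vector `φ(x,μ,γ) - c`, where
`M = Iₙ − 2(x−φ)(φ−c)ᵀ / (α − 3‖φ−c‖² + 2γμ + 2(φ−c)ᵀ(x−c))`. -/
noncomputable def ballM {n : ℕ} (α γ μ : ℝ) (c x φxμγ : EuclideanSpace ℝ (Fin n)) :
    EuclideanSpace ℝ (Fin n) :=
  (φxμγ - c) -
    (2 * ‖φxμγ - c‖ ^ 2 /
        (α - 3 * ‖φxμγ - c‖ ^ 2 + 2 * γ * μ + 2 * ⟪φxμγ - c, x - c⟫_ℝ)) • (x - φxμγ)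

open Filter
open scoped Topology

section Stationarity

variable {E : Type*} [NormedAddCommGroup E] [InnerProductSpace ℝ E]

/- Convexity of the objective enters only through `log y ≤ y - 1`. -/
theorem prox_objective_le_of_stationary {α s : ℝ} {c x p u : E} (hs : 0 ≤ s)
    (hp : ‖p - c‖ ^ 2 < α) (hu : ‖u - c‖ ^ 2 < α)
    (hstat : (α - ‖p - c‖ ^ 2) • (x - p) = (2 * s) • (p - c)) :
    1 / 2 * ‖x - p‖ ^ 2 - s * Real.log (α - ‖p - c‖ ^ 2) ≤
      1 / 2 * ‖x - u‖ ^ 2 - s * Real.log (α - ‖u - c‖ ^ 2) := by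
  set a := α - ‖p - c‖ ^ 2
  set b := α - ‖u - c‖ ^ 2
  set v := u - p
  have ha : 0 < a := by linarith
  have hb : 0 < b := by linarith
  have hxu : ‖x - u‖ ^ 2 = ‖x - p‖ ^ 2 - 2 * ⟪x - p, v⟫_ℝ + ‖v‖ ^ 2 := by
    rw [← norm_sub_sq_real, sub_sub_sub_cancel_right]
  have hab : a - b = 2 * ⟪p - c, v⟫_ℝ + ‖v‖ ^ 2 := by
    have : ‖u - c‖ ^ 2 = ‖p - c‖ ^ 2 + 2 * ⟪p - c, v⟫_ℝ + ‖v‖ ^ 2 := by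
      rw [← norm_add_sq_real, sub_add_sub_cancel']
    simp only [a, b, this]
    ring
  have hinner : a * ⟪x - p, v⟫_ℝ = 2 * s * ⟪p - c, v⟫_ℝ := by
    simpa only [real_inner_smul_left] using congrArg (⟪·, v⟫_ℝ) hstat
  have hlog : Real.log b - Real.log a ≤ b / a - 1 := by
    rw [← Real.log_div hb.ne' ha.ne']
    exact Real.log_le_sub_one_of_pos (div_pos hb ha)
  have hlin : s * (b / a - 1) = -⟪x - p, v⟫_ℝ - s * ‖v‖ ^ 2 / a := by
    field_simp
    linear_combination (-s) * hab + hinner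
  have hquad : 0 ≤ s * ‖v‖ ^ 2 / a := by positivity
  nlinarith [mul_le_mul_of_nonneg_left hlog hs]

theorem norm_add_smul_sub_sub_sq (c x : E) (t : ℝ) :
    ‖c + t • (x - c) - c‖ ^ 2 = t ^ 2 * ‖x - c‖ ^ 2 := by
  rw [add_sub_cancel_left, norm_smul, mul_pow, Real.norm_eq_abs, sq_abs]

theorem stationary_of_mem_ray {α s t : ℝ} {c x : E}
    (hroot : (1 - t) * (α - t ^ 2 * ‖x - c‖ ^ 2) = 2 * s * t) :
    (α - ‖c + t • (x - c) - c‖ ^ 2) • (x - (c + t • (x - c))) =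
      (2 * s) • (c + t • (x - c) - c) := by
  rw [norm_add_smul_sub_sub_sq, add_sub_cancel_left, smul_smul,
    show x - (c + t • (x - c)) = (1 - t) • (x - c) by module, smul_smul]
  congr 1
  linarith

end Stationarity

section Prox

variable {n : ℕ} {α γ μ : ℝ} {c x : EuclideanSpace ℝ (Fin n)}

theorem ballProxObj_of_lt {u : EuclideanSpace ℝ (Fin n)} (hu : ‖u - c‖ ^ 2 < α) :
    ballProxObj α c γ μ x u =
      ((1 / 2 * ‖x - u‖ ^ 2 - γ * μ * Real.log (α - ‖u - c‖ ^ 2) : ℝ) : EReal) := by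
  rw [ballProxObj, ballBarrier, if_pos hu, ← EReal.coe_mul, ← EReal.coe_add]
  congr 1
  ring

theorem ballProxObj_of_not_lt {u : EuclideanSpace ℝ (Fin n)} (hγμ : 0 < γ * μ)
    (hu : ¬‖u - c‖ ^ 2 < α) : ballProxObj α c γ μ x u = ⊤ := by
  rw [ballProxObj, ballBarrier, if_neg hu, EReal.coe_mul_top_of_pos hγμ, EReal.coe_add_top]

theorem ballProxObj_le_of_stationary {p : EuclideanSpace ℝ (Fin n)} (hγμ : 0 < γ * μ)
    (hp : ‖p - c‖ ^ 2 < α) (hstat : (α - ‖p - c‖ ^ 2) • (x - p) = (2 * (γ * μ)) • (p - c))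
    (u : EuclideanSpace ℝ (Fin n)) : ballProxObj α c γ μ x p ≤ ballProxObj α c γ μ x u := by
  by_cases hu : ‖u - c‖ ^ 2 < α
  · rw [ballProxObj_of_lt hp, ballProxObj_of_lt hu, EReal.coe_le_coe_iff]
    exact prox_objective_le_of_stationary hγμ.le hp hu hstat
  · rw [ballProxObj_of_not_lt hγμ hu]
    exact le_top

end Prox

/- With `r = ‖x - c‖²`, the point `c + t (x - c)` is stationary for the weight `s = γμ`
exactly when `s = rayParam α r t`. -/
noncomputable def rayParam (α r t : ℝ) : ℝ := (1 - t) * (α - t ^ 2 * r) / (2 * t)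

section RayParam

variable {α r s t : ℝ}

theorem rayParam_eq_iff (ht : t ≠ 0) :
    rayParam α r t = s ↔ (1 - t) * (α - t ^ 2 * r) = 2 * s * t := by
  rw [rayParam, div_eq_iff (mul_ne_zero two_ne_zero ht), show s * (2 * t) = 2 * s * t by ring]

theorem exists_rayParam_eq (hα : 0 < α) (hs : 0 < s) :
    ∃ t, 0 < t ∧ t ^ 2 * r < α ∧ rayParam α r t = s := by
  have hcont : Continuous fun t : ℝ => 2 * s * t - (1 - t) * (α - t ^ 2 * r) := by fun_prop
  obtain ⟨t, ⟨ht0, ht1⟩, hroot⟩ := intermediate_value_Ioo zero_le_one hcont.continuousOn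
    (show (0 : ℝ) ∈ Set.Ioo _ _ by constructor <;> simp <;> linarith)
  have hroot : (1 - t) * (α - t ^ 2 * r) = 2 * s * t := by linarith [hroot]
  -- the root lies inside the ball because both `1 - t` and `2 s t` are positive
  have hinside : 0 < α - t ^ 2 * r :=
    pos_of_mul_pos_right (hroot ▸ by positivity) (sub_pos.2 ht1).le
  exact ⟨t, ht0, by linarith, (rayParam_eq_iff ht0.ne').2 hroot⟩

theorem hasStrictDerivAt_rayParam (ht : t ≠ 0) :
    HasStrictDerivAt (rayParam α r)
      (-(α - 3 * t ^ 2 * r + 2 * rayParam α r t + 2 * t * r) / (2 * t)) t := by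
  have hnum : HasStrictDerivAt (fun t : ℝ => (1 - t) * (α - t ^ 2 * r))
      (-1 * (α - t ^ 2 * r) + (1 - t) * -(2 * t * r)) t := by
    have h1 : HasStrictDerivAt (fun t : ℝ => 1 - t) (-1) t := by
      simpa using (hasStrictDerivAt_id t).const_sub 1
    have h2 : HasStrictDerivAt (fun t : ℝ => α - t ^ 2 * r) (-(2 * t * r)) t := by
      simpa using ((hasStrictDerivAt_pow 2 t).mul_const r).const_sub α
    exact h1.mul h2
  have hden : HasStrictDerivAt (fun t : ℝ => 2 * t) 2 t := by
    simpa using (hasStrictDerivAt_id t).const_mul 2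
  refine (hnum.div hden (mul_ne_zero two_ne_zero ht)).congr_deriv ?_
  rw [rayParam]
  field_simp
  ring

theorem rayParam_deriv_num_pos (hr : 0 ≤ r) (ht : 0 < t) (htα : t ^ 2 * r < α)
    (hs : 0 ≤ rayParam α r t) : 0 < α - 3 * t ^ 2 * r + 2 * rayParam α r t + 2 * t * r := by
  have hroot := (rayParam_eq_iff (α := α) (r := r) ht.ne').1 rfl
  have h1t : 0 ≤ 1 - t := by
    by_contra! h
    nlinarith [mul_neg_of_neg_of_pos h (sub_pos.2 htα)]
  nlinarith [mul_nonneg (mul_nonneg ht.le hr) h1t]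

theorem exists_local_inverse_rayParam (hr : 0 ≤ r) (ht : 0 < t) (htα : t ^ 2 * r < α)
    (hs : 0 ≤ rayParam α r t) :
    ∃ g : ℝ → ℝ,
      HasDerivAt g (-(2 * t) / (α - 3 * t ^ 2 * r + 2 * rayParam α r t + 2 * t * r))
        (rayParam α r t) ∧
      g (rayParam α r t) = t ∧
      ∀ᶠ s in 𝓝 (rayParam α r t), 0 < g s ∧ g s ^ 2 * r < α ∧ rayParam α r (g s) = s := by
  have hD := rayParam_deriv_num_pos hr ht htα hs
  have hH := hasStrictDerivAt_rayParam (α := α) (r := r) ht.ne'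
  have hH' : -(α - 3 * t ^ 2 * r + 2 * rayParam α r t + 2 * t * r) / (2 * t) ≠ 0 :=
    div_ne_zero (neg_ne_zero.2 hD.ne') (by positivity)
  set g := hH.localInverse _ _ _ hH'
  have hg0 : g (rayParam α r t) = t := (hH.eventually_left_inverse hH').self_of_nhds
  have hgt : Tendsto g (𝓝 (rayParam α r t)) (𝓝 t) := by
    have hc : ContinuousAt g (rayParam α r t) := (hH.to_localInverse hH').hasDerivAt.continuousAt
    simpa only [hg0] using hc.tendsto
  refine ⟨g, ?_, hg0, ?_⟩
  · exact (hH.to_localInverse hH').hasDerivAt.congr_deriv (by rw [inv_div, div_neg, neg_div])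
  · filter_upwards [hgt.eventually_const_lt ht,
      ((hgt.pow 2).mul_const r).eventually_lt_const htα,
      hH.eventually_right_inverse hH'] with s hpos hin hinv
    exact ⟨hpos, hin, hinv⟩

end RayParam

theorem partials_of_eventuallyEq_add_smul_comp_mul {E : Type*} [NormedAddCommGroup E]
    [NormedSpace ℝ E] {Φ : ℝ → ℝ → E} {g : ℝ → ℝ} {g' μ γ : ℝ} {c v : E}
    (hg : HasDerivAt g g' (γ * μ))
    (hΦ : ∀ᶠ p : ℝ × ℝ in 𝓝 (μ, γ), Φ p.1 p.2 = c + g (p.2 * p.1) • v) :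
    DifferentiableAt ℝ (fun p : ℝ × ℝ => Φ p.1 p.2) (μ, γ) ∧
      HasDerivAt (fun t => Φ t γ) ((g' * γ) • v) μ ∧
      HasDerivAt (fun t => Φ μ t) ((g' * μ) • v) γ := by
  refine ⟨?_, ?_, ?_⟩
  · have hprod : DifferentiableAt ℝ (fun p : ℝ × ℝ => p.2 * p.1) (μ, γ) :=
      differentiableAt_snd.mul differentiableAt_fst
    exact (((hg.differentiableAt.comp (μ, γ) hprod).smul_const v).const_add c).congr_of_eventuallyEq
      hΦ
  · have hline : Tendsto (fun t : ℝ => (t, γ)) (𝓝 μ) (𝓝 (μ, γ)) :=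
      (continuous_id.prodMk continuous_const).tendsto μ
    have hcomp := hg.comp μ (hasDerivAt_const_mul γ)
    exact ((hcomp.smul_const v).const_add c).congr_of_eventuallyEq (hline.eventually hΦ)
  · have hline : Tendsto (fun t : ℝ => (μ, t)) (𝓝 γ) (𝓝 (μ, γ)) :=
      (continuous_const.prodMk continuous_id).tendsto γ
    have hcomp := hg.comp γ (hasDerivAt_mul_const μ)
    exact ((hcomp.smul_const v).const_add c).congr_of_eventuallyEq (hline.eventually hΦ)

theorem ballM_add_smul_sub {n : ℕ} {α γ μ t : ℝ} {c x : EuclideanSpace ℝ (Fin n)}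
    (hD : α - 3 * (t ^ 2 * ‖x - c‖ ^ 2) + 2 * γ * μ + 2 * (t * ‖x - c‖ ^ 2) ≠ 0) :
    ballM α γ μ c x (c + t • (x - c)) =
      (t * (α - t ^ 2 * ‖x - c‖ ^ 2 + 2 * γ * μ) /
        (α - 3 * (t ^ 2 * ‖x - c‖ ^ 2) + 2 * γ * μ + 2 * (t * ‖x - c‖ ^ 2))) • (x - c) := by
  rw [ballM, norm_add_smul_sub_sub_sq, add_sub_cancel_left, real_inner_smul_left,
    real_inner_self_eq_norm_sq, show x - (c + t • (x - c)) = (1 - t) • (x - c) by module,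
    smul_smul, ← sub_smul]
  congr 1
  rw [div_mul_eq_mul_div, sub_div' hD]
  ring

theorem eq_add_smul_of_rayParam_eq {n : ℕ} {α : ℝ} {c x : EuclideanSpace ℝ (Fin n)}
    {φ : ℝ → ℝ → EuclideanSpace ℝ (Fin n)}
    (hφ : ∀ μ γ : ℝ, 0 < μ → 0 < γ → ∀ u : EuclideanSpace ℝ (Fin n), u ≠ φ μ γ →
      ballProxObj α c γ μ x (φ μ γ) < ballProxObj α c γ μ x u)
    {μ γ t : ℝ} (hμ : 0 < μ) (hγ : 0 < γ) (ht : 0 < t) (htα : t ^ 2 * ‖x - c‖ ^ 2 < α)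
    (hroot : rayParam α (‖x - c‖ ^ 2) t = γ * μ) :
    φ μ γ = c + t • (x - c) := by
  have hγμ := mul_pos hγ hμ
  have hp : ‖c + t • (x - c) - c‖ ^ 2 < α := by rwa [norm_add_smul_sub_sub_sq]
  have hmin := ballProxObj_le_of_stationary hγμ hp
    (stationary_of_mem_ray ((rayParam_eq_iff ht.ne').1 hroot))
  by_contra hne
  exact (hmin (φ μ γ)).not_gt (hφ μ γ hμ hγ _ (Ne.symm hne))

theorem ball_prox_deriv_mu_gamma {n : ℕ} (α : ℝ) (hα : 0 < α)
    (c x : EuclideanSpace ℝ (Fin n))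
    (φ : ℝ → ℝ → EuclideanSpace ℝ (Fin n))
    (hφ : ∀ μ γ : ℝ, 0 < μ → 0 < γ → ∀ u : EuclideanSpace ℝ (Fin n), u ≠ φ μ γ →
      ballProxObj α c γ μ x (φ μ γ) < ballProxObj α c γ μ x u) :
    ∀ μ γ : ℝ, 0 < μ → 0 < γ →
      DifferentiableAt ℝ (fun p : ℝ × ℝ => φ p.1 p.2) (μ, γ) ∧
      HasDerivAt (fun t : ℝ => φ t γ)
        ((-2 * γ / (α - ‖φ μ γ - c‖ ^ 2 + 2 * γ * μ)) • ballM α γ μ c x (φ μ γ)) μ ∧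
      HasDerivAt (fun t : ℝ => φ μ t)
        ((-2 * μ / (α - ‖φ μ γ - c‖ ^ 2 + 2 * γ * μ)) • ballM α γ μ c x (φ μ γ)) γ := by
  intro μ γ hμ hγ
  have hr : 0 ≤ ‖x - c‖ ^ 2 := by positivity
  obtain ⟨t, ht, htα, hroot⟩ := exists_rayParam_eq (r := ‖x - c‖ ^ 2) hα (mul_pos hγ hμ)
  have hs : 0 ≤ rayParam α (‖x - c‖ ^ 2) t := hroot ▸ (mul_pos hγ hμ).le
  have hD := rayParam_deriv_num_pos hr ht htα hs
  obtain ⟨g, hg, -, hgev⟩ := exists_local_inverse_rayParam hr ht htα hs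
  rw [hroot] at hD hg hgev
  have hkey : ∀ᶠ p : ℝ × ℝ in 𝓝 (μ, γ), φ p.1 p.2 = c + g (p.2 * p.1) • (x - c) := by
    have hprod : Tendsto (fun p : ℝ × ℝ => p.2 * p.1) (𝓝 (μ, γ)) (𝓝 (γ * μ)) :=
      (continuous_snd.mul continuous_fst).tendsto _
    filter_upwards [(continuous_fst.tendsto _).eventually_const_lt hμ,
      (continuous_snd.tendsto _).eventually_const_lt hγ, hprod.eventually hgev]
      with p hp₁ hp₂ ⟨hpos, hin, hinv⟩
    exact eq_add_smul_of_rayParam_eq hφ hp₁ hp₂ hpos hin hinv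
  obtain ⟨hdiff, hdμ, hdγ⟩ := partials_of_eventuallyEq_add_smul_comp_mul hg hkey
  have hA : 0 < α - t ^ 2 * ‖x - c‖ ^ 2 + 2 * γ * μ := by nlinarith [mul_pos hγ hμ]
  rw [eq_add_smul_of_rayParam_eq hφ hμ hγ ht htα hroot, norm_add_smul_sub_sub_sq,
    ballM_add_smul_sub (by linarith)]
  refine ⟨hdiff, hdμ.congr_deriv ?_, hdγ.congr_deriv ?_⟩ <;> rw [smul_smul] <;> congr 1 <;>
    field_simp
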